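/- arXiv:1207.0842 — 3 statements merged into one kernel-verified Lean document; each statement's English description precedes it below -/
import Mathlib

section
/- Let p be a prime and χ a nontrivial multiplicative character of F_p* (extended by χ(0)=0). Suppose that for finite nonempty sets U, V of F_p and a nonzero c ∈ F_p the double sum S = Σ_{u∈U} Σ_{v∈V} χ(c·u + v) satisfies |S| ≤ (#U)^{(2ν-1)/(2ν)} · ( (#V)^{1/2}·2^{k/(2ν)} + #V·p^{1/(4ν)}·(log p)^{1/(2ν)} ) · C for some constant C depending only on ν, where U ⊆ {0,...,2^k - 1}. Then, whenever #V ≥ 2^{(1+η)k/(2ν)} and #U ≥ 2^{r/2}·p^{2νδ}·log p with 2^r < p, it follows that |S| ≤ C'·#U·#V·p^{-δ} for a constant C' depending only on ν and η. -/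
/-!
With `e = 1/(2ν)` the lower bound on `#U` gives `(#U)^e ≥ 2^(r e/2) p^δ (log p)^e`. Both terms of
the bracket are at most `2 #V 2^(r e/2) (log p)^e`: the first because `#V^(1/2) ≥ 2^((1+η) k e/2)`
and `k ≤ r`, the second because `p ≤ 2^(r+1)`; in both cases `(log p)^e ≥ log 2 ≥ 1/2` absorbs
the leftover constant. Hence `(#U)^(1-e)` times the bracket is at most `4 #V (#U)^(1-e) (#U)^e p^(-δ)`.
-/

open Real

lemma one_half_le_log_rpow {x e : ℝ} (hx : 2 ≤ x) (he0 : 0 ≤ e) (he1 : e ≤ 1) :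
    1 / 2 ≤ log x ^ e :=
  calc 1 / 2 ≤ log 2 ^ (1 : ℝ) := by rw [rpow_one]; linarith [log_two_gt_d9]
    _ ≤ log 2 ^ e := rpow_le_rpow_of_exponent_ge (log_pos one_lt_two)
        (by linarith [log_two_lt_d9]) he1
    _ ≤ log x ^ e := rpow_le_rpow (log_nonneg one_le_two) (log_le_log two_pos hx) he0

lemma rpow_le_two_mul_two_rpow_mul {x r e : ℝ} (hx : 0 ≤ x) (hxr : x ≤ 2 ^ (r + 1))
    (he0 : 0 ≤ e) (he1 : e ≤ 1) : x ^ e ≤ 2 * 2 ^ (r * e) :=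
  calc x ^ e ≤ (2 ^ (r + 1)) ^ e := rpow_le_rpow hx hxr he0
    _ = 2 ^ (r * e) * 2 ^ e := by rw [← rpow_mul zero_le_two, ← rpow_add two_pos]; ring_nf
    _ ≤ 2 ^ (r * e) * 2 ^ (1 : ℝ) := by gcongr; exact one_le_two
    _ = 2 * 2 ^ (r * e) := by rw [rpow_one, mul_comm]

lemma rpow_half_mul_two_rpow_le {v k r η e : ℝ} (hk : 0 ≤ k) (hkr : k ≤ r) (hη : 0 ≤ η)
    (he : 0 ≤ e) (hv : 2 ^ ((1 + η) * k * e) ≤ v) :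
    v ^ (1 / 2 : ℝ) * 2 ^ (k * e) ≤ v * 2 ^ (r * e / 2) := by
  have hv0 : 0 ≤ v := (rpow_pos_of_pos two_pos _).le.trans hv
  have hsplit : (2 : ℝ) ^ (k * e) ≤ (2 ^ ((1 + η) * k * e)) ^ (1 / 2 : ℝ) * 2 ^ (r * e / 2) := by
    rw [← rpow_mul zero_le_two, ← rpow_add two_pos]
    apply rpow_le_rpow_of_exponent_le one_le_two
    nlinarith [mul_nonneg (mul_nonneg hη hk) he, mul_le_mul_of_nonneg_right hkr he]
  calc v ^ (1 / 2 : ℝ) * 2 ^ (k * e)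
      ≤ v ^ (1 / 2 : ℝ) * ((2 ^ ((1 + η) * k * e)) ^ (1 / 2 : ℝ) * 2 ^ (r * e / 2)) := by
        gcongr
    _ ≤ v ^ (1 / 2 : ℝ) * (v ^ (1 / 2 : ℝ) * 2 ^ (r * e / 2)) := by gcongr
    _ = v * 2 ^ (r * e / 2) := by rw [← mul_assoc, ← sqrt_eq_rpow, mul_self_sqrt hv0]

lemma rpow_half_mul_add_le {p v k r η e : ℝ} (hp : 2 ≤ p) (hpr : p ≤ 2 ^ (r + 1))
    (hk : 0 ≤ k) (hkr : k ≤ r) (hη : 0 ≤ η) (he0 : 0 ≤ e) (he1 : e ≤ 1)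
    (hv : 2 ^ ((1 + η) * k * e) ≤ v) :
    v ^ (1 / 2 : ℝ) * 2 ^ (k * e) + v * p ^ (e / 2) * log p ^ e
      ≤ 4 * v * 2 ^ (r * e / 2) * log p ^ e := by
  have hv0 : 0 ≤ v := (rpow_pos_of_pos two_pos _).le.trans hv
  have hlog := one_half_le_log_rpow hp he0 he1
  have hfirst := rpow_half_mul_two_rpow_le hk hkr hη he0 hv
  have hsecond : p ^ (e / 2) ≤ 2 * 2 ^ (r * e / 2) := by
    rw [mul_div_assoc]
    exact rpow_le_two_mul_two_rpow_mul (by linarith) hpr (by positivity) (by linarith)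
  have h2 : 0 ≤ v * 2 ^ (r * e / 2) := by positivity
  calc v ^ (1 / 2 : ℝ) * 2 ^ (k * e) + v * p ^ (e / 2) * log p ^ e
      ≤ v * 2 ^ (r * e / 2) * (2 * log p ^ e) + v * (2 * 2 ^ (r * e / 2)) * log p ^ e := by
        gcongr ?_ + ?_
        · exact hfirst.trans (le_mul_of_one_le_right h2 (by linarith))
        · gcongr
    _ = 4 * v * 2 ^ (r * e / 2) * log p ^ e := by ring

lemma two_rpow_mul_rpow_mul_le_rpow {u p L r s e : ℝ} (hp : 0 ≤ p) (hL : 0 ≤ L) (he : 0 ≤ e)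
    (hu : 2 ^ (r / 2) * p ^ s * L ≤ u) : 2 ^ (r * e / 2) * p ^ (s * e) * L ^ e ≤ u ^ e := by
  calc 2 ^ (r * e / 2) * p ^ (s * e) * L ^ e = (2 ^ (r / 2) * p ^ s * L) ^ e := by
        rw [mul_rpow (by positivity) hL, mul_rpow (by positivity) (by positivity),
          ← rpow_mul zero_le_two, ← rpow_mul hp, div_mul_eq_mul_div]
    _ ≤ u ^ e := rpow_le_rpow (by positivity) hu he

lemma rpow_one_sub_mul_le_div {u M T e : ℝ} (hu : 0 < u) (hM : 0 < M) (hT : T * M ≤ u ^ e) :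
    u ^ (1 - e) * T ≤ u / M := by
  rw [le_div_iff₀ hM, mul_assoc]
  calc u ^ (1 - e) * (T * M) ≤ u ^ (1 - e) * u ^ e := by gcongr
    _ = u := by rw [← rpow_add hu, sub_add_cancel, rpow_one]
theorem character_sum_saving_general (ν : ℕ) (hν : 0 < ν) (η : ℝ) (hη : 0 < η)
    (δ C : ℝ) (hC : 0 < C) :
    ∃ C' : ℝ, 0 < C' ∧
      ∀ (p r k : ℕ), p.Prime → 2 ^ r < p → p ≤ 2 ^ (r + 1) → k ≤ r →
      ∀ χ : MulChar (ZMod p) ℂ, χ ≠ 1 →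
      ∀ c : ZMod p, c ≠ 0 →
      ∀ U V : Finset (ZMod p), U.Nonempty → V.Nonempty →
      (∀ u ∈ U, u.val < 2 ^ k) →
      ‖∑ u ∈ U, ∑ v ∈ V, χ (c * u + v)‖
        ≤ (U.card : ℝ) ^ (((2 * ν - 1 : ℝ)) / (2 * ν)) *
            ((V.card : ℝ) ^ ((1 : ℝ) / 2) * (2 : ℝ) ^ ((k : ℝ) / (2 * ν))
              + (V.card : ℝ) * (p : ℝ) ^ ((1 : ℝ) / (4 * ν)) *
                  (Real.log p) ^ ((1 : ℝ) / (2 * ν))) * C →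
      (2 : ℝ) ^ ((1 + η) * k / (2 * ν)) ≤ (V.card : ℝ) →
      (2 : ℝ) ^ ((r : ℝ) / 2) * (p : ℝ) ^ (2 * (ν : ℝ) * δ) * Real.log p ≤ (U.card : ℝ) →
      ‖∑ u ∈ U, ∑ v ∈ V, χ (c * u + v)‖
        ≤ C' * U.card * V.card * (p : ℝ) ^ (-δ) := by
  refine ⟨4 * C, by positivity, fun p r k hp _ hpr hkr _ _ _ _ U V hU _ _ hS hV hUcard ↦ ?_⟩
  have hν1 : (1 : ℝ) ≤ ν := by exact_mod_cast hν
  set e : ℝ := 1 / (2 * ν) with he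
  have he0 : 0 < e := by positivity
  have he1 : e ≤ 1 := by rw [he, div_le_one (by positivity)]; linarith
  have hp2 : (2 : ℝ) ≤ p := by exact_mod_cast hp.two_le
  have hp_le : (p : ℝ) ≤ 2 ^ ((r : ℝ) + 1) := by
    rw [← Nat.cast_succ, rpow_natCast]; exact_mod_cast hpr
  rw [show (2 * ν - 1 : ℝ) / (2 * ν) = 1 - e by rw [he]; field_simp,
    show (k : ℝ) / (2 * ν) = k * e by rw [he]; field_simp,
    show (1 : ℝ) / (4 * ν) = e / 2 by rw [he]; field_simp; ring] at hS
  rw [show (1 + η) * k / (2 * ν) = (1 + η) * k * e by rw [he]; field_simp] at hV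
  have hUe := two_rpow_mul_rpow_mul_le_rpow (by positivity) (log_nonneg (by linarith)) he0.le hUcard
  rw [show 2 * (ν : ℝ) * δ * e = δ by rw [he]; field_simp] at hUe
  calc _ ≤ _ := hS
    _ ≤ (U.card : ℝ) ^ (1 - e) * (4 * V.card * 2 ^ (r * e / 2) * log p ^ e) * C := by
        gcongr
        exact rpow_half_mul_add_le hp2 hp_le (Nat.cast_nonneg k) (by exact_mod_cast hkr) hη.le
          he0.le he1 hV
    _ = 4 * C * V.card * ((U.card : ℝ) ^ (1 - e) * (2 ^ (r * e / 2) * log p ^ e)) := by ring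
    _ ≤ 4 * C * V.card * (U.card / p ^ δ) := by
        gcongr
        exact rpow_one_sub_mul_le_div (by exact_mod_cast hU.card_pos) (by positivity)
          (by linarith)
    _ = 4 * C * U.card * V.card * (p : ℝ) ^ (-δ) := by rw [rpow_neg (by positivity)]; ring

/-- Derivation of the saving bound from the double character sum estimate:
if `|S| ≤ (#U)^((2ν-1)/(2ν)) ((#V)^(1/2) 2^(k/(2ν)) + #V p^(1/(4ν)) (log p)^(1/(2ν))) C`
where `U ⊆ {0, …, 2^k - 1}`, then whenever `#V ≥ 2^((1+η)k/(2ν))` and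
`#U ≥ 2^(r/2) p^(2νδ) log p` one has `|S| ≤ C' #U #V p^(-δ)` with `C'` a constant
depending only on `ν`, `η` (and the data `C`, `δ`). -/
theorem character_sum_saving (ν : ℕ) (hν : 0 < ν) (η : ℝ) (hη : 0 < η)
    (δ C : ℝ) (hδ : 0 < δ) (hC : 0 < C) :
    ∃ C' : ℝ, 0 < C' ∧
      ∀ (p r k : ℕ), p.Prime → 2 ^ r < p → p ≤ 2 ^ (r + 1) → k ≤ r →
      ∀ χ : MulChar (ZMod p) ℂ, χ ≠ 1 →
      ∀ c : ZMod p, c ≠ 0 →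
      ∀ U V : Finset (ZMod p), U.Nonempty → V.Nonempty →
      (∀ u ∈ U, u.val < 2 ^ k) →
      ‖∑ u ∈ U, ∑ v ∈ V, χ (c * u + v)‖
        ≤ (U.card : ℝ) ^ (((2 * ν - 1 : ℝ)) / (2 * ν)) *
            ((V.card : ℝ) ^ ((1 : ℝ) / 2) * (2 : ℝ) ^ ((k : ℝ) / (2 * ν))
              + (V.card : ℝ) * (p : ℝ) ^ ((1 : ℝ) / (4 * ν)) *
                  (Real.log p) ^ ((1 : ℝ) / (2 * ν))) * C →
      (2 : ℝ) ^ ((1 + η) * k / (2 * ν)) ≤ (V.card : ℝ) →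
      (2 : ℝ) ^ ((r : ℝ) / 2) * (p : ℝ) ^ (2 * (ν : ℝ) * δ) * Real.log p ≤ (U.card : ℝ) →
      ‖∑ u ∈ U, ∑ v ∈ V, χ (c * u + v)‖
        ≤ C' * U.card * V.card * (p : ℝ) ^ (-δ) :=
  character_sum_saving_general ν hν η hη δ C hC
end

section
/- Let p be an odd prime and suppose Q ⊆ {1, ..., p-1} is a set such that for every nontrivial multiplicative character χ modulo p, |Σ_{n∈Q} χ(n)| ≤ #Q · p^{-δ} for some δ > 0. Then the number P of primitive roots modulo p contained in Q satisfies P ≥ (φ(p-1)/(p-1))·#Q - c·#Q·p^{-δ}·τ(p-1) for an absolute constant c, where τ denotes the number-of-divisors function. In particular, if p is sufficiently large (so that τ(p-1)·p^{-δ} = o(φ(p-1)/(p-1))), then Q contains a primitive root modulo p. -/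
open scoped Classical

/-!
With `m = q - 1`, a nonzero `a ∈ 𝔽_q` is a primitive root iff `m / ord a = 1`, so by Möbius
inversion its indicator is `∑_{d ∣ m} μ(d) [a ^ (m/d) = 1]`. Since the character group is cyclic
of order `m`, the characters with `χ ^ d = 1` are the `d` powers of `χ₀ ^ (m/d)` for a generator
`χ₀`, and a geometric sum gives `[a ^ (m/d) = 1] = (1/d) ∑_{χ^d = 1} χ(a)`. Summing over `Q`,
the trivial character contributes `#Q ∑_{d ∣ m} μ(d)/d = #Q φ(m)/m`, and for each `d` the at most
`d` remaining characters contribute at most `d · #Q p^(-δ)`; after the weight `μ(d)/d` this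
leaves an error of at most `τ(m) · #Q p^(-δ)`, so `c = 1` works.
-/

open Finset ArithmeticFunction ArithmeticFunction.Moebius

theorem sum_filter_pow_eq_one_of_forall_mem_zpowers {G M : Type*} [Group G] [Fintype G]
    [DecidableEq G] [AddCommMonoid M] {g : G} (hg : ∀ x, x ∈ Subgroup.zpowers g) {d : ℕ}
    (hd : d ∣ Fintype.card G) (f : G → M) :
    ∑ x with x ^ d = 1, f x = ∑ j ∈ range d, f ((g ^ (Fintype.card G / d)) ^ j) := by
  have : IsCyclic G := ⟨⟨g, hg⟩⟩
  have hG : Fintype.card G ≠ 0 := Fintype.card_ne_zero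
  have hd0 : d ≠ 0 := ne_zero_of_dvd_ne_zero hG hd
  have hg_ord : orderOf g = Fintype.card G := by
    rw [orderOf_eq_card_of_forall_mem_zpowers hg, Nat.card_eq_fintype_card]
  set ψ := g ^ (Fintype.card G / d)
  have hψ : orderOf ψ = d := by
    rw [orderOf_pow_of_dvd (Nat.div_ne_zero_iff_of_dvd hd |>.mpr ⟨hG, hd0⟩)
      (by rw [hg_ord]; exact Nat.div_dvd_of_dvd hd), hg_ord, Nat.div_div_self hd hG]
  have hinj : Set.InjOn (ψ ^ ·) (range d) := by
    simpa [← hψ] using pow_injOn_Iio_orderOf (x := ψ)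
  have hsub : (range d).image (ψ ^ ·) ⊆ ({x | x ^ d = 1} : Finset G) := by
    simp only [subset_iff, mem_image, mem_filter, mem_univ, true_and]
    rintro _ ⟨j, -, rfl⟩
    rw [← pow_mul, mul_comm, pow_mul, ← hψ, pow_orderOf_eq_one, one_pow]
  have hcard : #{x : G | x ^ d = 1} ≤ #((range d).image (ψ ^ ·)) := by
    rw [card_image_of_injOn hinj, card_range]
    exact IsCyclic.card_pow_eq_one_le (Nat.pos_of_ne_zero hd0)
  rw [← eq_of_subset_of_card_le hsub hcard, sum_image hinj]

theorem MulChar.eq_one_of_apply_eq_one_of_forall_mem_zpowers {M R : Type*} [CommMonoid M]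
    [Finite M] [CommRing R] [IsDomain R] [HasEnoughRootsOfUnity R (Monoid.exponent Mˣ)]
    {χ₀ : MulChar M R} (hχ₀ : ∀ χ, χ ∈ Subgroup.zpowers χ₀) {a : M} (ha : χ₀ a = 1) :
    a = 1 := by
  by_contra ha1
  obtain ⟨χ, hχ⟩ := exists_apply_ne_one_of_hasEnoughRootsOfUnity M R ha1
  obtain ⟨k, rfl⟩ := (isOfFinOrder_of_finite χ₀).mem_powers_iff_mem_zpowers.mpr (hχ₀ χ)
  obtain ⟨u, rfl⟩ : IsUnit a := by
    by_contra hu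
    simp [map_nonunit χ₀ hu] at ha
  exact hχ (by rw [pow_apply_coe, ha, one_pow])

theorem geom_sum_eq_ite_of_pow_eq_one {R : Type*} [CommRing R] [IsDomain R] {w : R} {d : ℕ}
    (hw : w ^ d = 1) : ∑ j ∈ range d, w ^ j = if w = 1 then (d : R) else 0 := by
  split_ifs with h
  · simp [h]
  · have := mul_neg_geom_sum w d
    rw [hw, sub_self] at this
    exact (mul_eq_zero.mp this).resolve_left (sub_ne_zero.mpr (Ne.symm h))

theorem sum_filter_divisors_moebius_eq_ite_isPrimitiveRoot {M R : Type*} [CommMonoid M] [Ring R]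
    {u : M} {m : ℕ} (hm : m ≠ 0) (hu : u ^ m = 1) :
    ∑ d ∈ m.divisors with u ^ (m / d) = 1, (μ d : R) = if IsPrimitiveRoot u m then 1 else 0 := by
  have ho : orderOf u ∣ m := orderOf_dvd_of_pow_eq_one hu
  have hfilter : {d ∈ m.divisors | u ^ (m / d) = 1} = (m / orderOf u).divisors := by
    rw [← Nat.divisors_filter_dvd_of_dvd hm (Nat.div_dvd_of_dvd ho)]
    refine filter_congr fun d hd ↦ ?_
    rw [← orderOf_dvd_iff_pow_eq_one, Nat.dvd_div_iff_mul_dvd (Nat.dvd_of_mem_divisors hd),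
      Nat.dvd_div_iff_mul_dvd ho, mul_comm]
  have hmoebius := congrArg (· (m / orderOf u)) (coe_moebius_mul_coe_zeta (R := R))
  simp only [coe_mul_zeta_apply, intCoe_apply, one_apply] at hmoebius
  rw [hfilter, hmoebius, IsPrimitiveRoot.iff_orderOf]
  congr 1
  exact propext ⟨Nat.eq_of_dvd_of_div_eq_one ho,
    fun h ↦ by rw [h, Nat.div_self (Nat.pos_of_ne_zero hm)]⟩

theorem sum_divisors_moebius_div_eq_totient_div {K : Type*} [Field K] [CharZero K] {m : ℕ}
    (hm : m ≠ 0) : ∑ d ∈ m.divisors, (μ d : K) / d = (m.totient : K) / m := by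
  have hinv := (sum_eq_iff_sum_mul_moebius_eq (f := fun n ↦ (n.totient : K))
    (g := fun n ↦ (n : K))).mp (fun n _ ↦ by exact_mod_cast Nat.sum_totient n) m
    (Nat.pos_of_ne_zero hm)
  rw [Nat.sum_divisorsAntidiagonal (f := fun a b ↦ (μ a : K) * b)] at hinv
  rw [← hinv, sum_div]
  refine sum_congr rfl fun d hd ↦ ?_
  have hd0 : (d : K) ≠ 0 := Nat.cast_ne_zero.mpr (Nat.pos_of_mem_divisors hd).ne'
  rw [Nat.cast_div (Nat.dvd_of_mem_divisors hd) hd0]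
  field_simp

theorem norm_sum_divisors_moebius_div_mul_le {m : ℕ} {f : ℕ → ℂ} {B : ℝ}
    (hf : ∀ d ∈ m.divisors, ‖f d‖ ≤ d * B) :
    ‖∑ d ∈ m.divisors, (μ d : ℂ) / d * f d‖ ≤ m.divisors.card * B := by
  calc ‖∑ d ∈ m.divisors, (μ d : ℂ) / d * f d‖ ≤ ∑ d ∈ m.divisors, B := by
        refine norm_sum_le_of_le _ fun d hd ↦ ?_
        have hd0 : (0 : ℝ) < d := by exact_mod_cast Nat.pos_of_mem_divisors hd
        have hμ : ‖(μ d : ℂ)‖ ≤ 1 := by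
          rw [Complex.norm_intCast]
          exact_mod_cast abs_moebius_le_one
        calc ‖(μ d : ℂ) / d * f d‖ = ‖(μ d : ℂ)‖ / d * ‖f d‖ := by
              rw [norm_mul, norm_div, Complex.norm_natCast]
          _ ≤ 1 / d * (d * B) := by gcongr; exact hf d hd
          _ = B := by field_simp
    _ = m.divisors.card * B := by rw [sum_const, nsmul_eq_mul]

namespace MulChar

section

variable {F R : Type*} [Field F] [Fintype F] [CommRing R]
  [HasEnoughRootsOfUnity R (Monoid.exponent Fˣ)]

instance isCyclic : IsCyclic (MulChar F R) :=
  isCyclic_of_surjective _ (mulEquiv_units F R).some.symm.surjective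

variable [Fintype (MulChar F R)]

theorem card_eq_card_sub_one : Fintype.card (MulChar F R) = Fintype.card F - 1 := by
  rw [← Nat.card_eq_fintype_card, card_eq_card_units_of_hasEnoughRootsOfUnity,
    Nat.card_eq_fintype_card, Fintype.card_units]

theorem card_filter_pow_eq_one {d : ℕ} (hd : d ∣ Fintype.card F - 1) :
    #{χ : MulChar F R | χ ^ d = 1} = d := by
  obtain ⟨χ₀, hχ₀⟩ := IsCyclic.exists_generator (α := MulChar F R)
  rw [← card_eq_card_sub_one (R := R)] at hd
  rw [card_eq_sum_ones, sum_filter_pow_eq_one_of_forall_mem_zpowers hχ₀ hd, sum_const, card_range,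
    smul_eq_mul, mul_one]

theorem sum_filter_pow_eq_one_apply [IsDomain R] {d : ℕ} (hd : d ∣ Fintype.card F - 1) {a : F}
    (ha : a ≠ 0) :
    ∑ χ : MulChar F R with χ ^ d = 1, χ a
      = if a ^ ((Fintype.card F - 1) / d) = 1 then (d : R) else 0 := by
  obtain ⟨χ₀, hχ₀⟩ := IsCyclic.exists_generator (α := MulChar F R)
  obtain ⟨u, rfl⟩ := ha.isUnit
  rw [← card_eq_card_sub_one (R := R)] at hd ⊢
  set m := Fintype.card (MulChar F R)
  have hpow_apply : ∀ j, ((χ₀ ^ (m / d)) ^ j) (u : F) = χ₀ ((u : F) ^ (m / d)) ^ j := by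
    intro j
    rw [← pow_mul, pow_apply_coe, map_pow, pow_mul]
  have hroot : χ₀ ((u : F) ^ (m / d)) ^ d = 1 := by
    rw [map_pow, ← pow_mul, Nat.div_mul_cancel hd, ← pow_apply_coe, pow_card_eq_one,
      one_apply_coe]
  have hfaithful : χ₀ ((u : F) ^ (m / d)) = 1 ↔ (u : F) ^ (m / d) = 1 :=
    ⟨eq_one_of_apply_eq_one_of_forall_mem_zpowers hχ₀, fun h ↦ by rw [h, map_one]⟩
  rw [sum_filter_pow_eq_one_of_forall_mem_zpowers hχ₀ hd, sum_congr rfl fun j _ ↦ hpow_apply j,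
    geom_sum_eq_ite_of_pow_eq_one hroot, if_congr hfaithful rfl rfl]

end

section

variable {F K : Type*} [Field F] [Fintype F] [Field K] [CharZero K]
  [HasEnoughRootsOfUnity K (Monoid.exponent Fˣ)] [Fintype (MulChar F K)]

theorem ite_isPrimitiveRoot_eq_sum_divisors {a : F} (ha : a ≠ 0) :
    (if IsPrimitiveRoot a (Fintype.card F - 1) then 1 else 0 : K)
      = ∑ d ∈ (Fintype.card F - 1).divisors,
          (μ d : K) / d * ∑ χ : MulChar F K with χ ^ d = 1, χ a := by
  have hm : Fintype.card F - 1 ≠ 0 := Nat.sub_ne_zero_of_lt Fintype.one_lt_card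
  rw [← sum_filter_divisors_moebius_eq_ite_isPrimitiveRoot hm
    (FiniteField.pow_card_sub_one_eq_one a ha), sum_filter]
  refine sum_congr rfl fun d hd ↦ ?_
  have hd0 : (d : K) ≠ 0 := Nat.cast_ne_zero.mpr (Nat.pos_of_mem_divisors hd).ne'
  rw [sum_filter_pow_eq_one_apply (Nat.dvd_of_mem_divisors hd) ha]
  split_ifs
  · field_simp
  · simp

theorem card_filter_isPrimitiveRoot_eq_sum_divisors {ι : Type*} (Q : Finset ι) (a : ι → F)
    (ha : ∀ i ∈ Q, a i ≠ 0) :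
    (#{i ∈ Q | IsPrimitiveRoot (a i) (Fintype.card F - 1)} : K)
      = ∑ d ∈ (Fintype.card F - 1).divisors,
          (μ d : K) / d * ∑ χ : MulChar F K with χ ^ d = 1, ∑ i ∈ Q, χ (a i) := by
  rw [natCast_card_filter, sum_congr rfl fun i hi ↦ ite_isPrimitiveRoot_eq_sum_divisors (ha i hi),
    sum_comm]
  refine sum_congr rfl fun d _ ↦ ?_
  rw [← mul_sum, sum_comm]

end

end MulChar

theorem abs_card_filter_isPrimitiveRoot_sub_le {F ι : Type*} [Field F] [Fintype F]
    [Fintype (MulChar F ℂ)] (Q : Finset ι) (a : ι → F) (ha : ∀ i ∈ Q, a i ≠ 0) {B : ℝ}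
    (hB0 : 0 ≤ B) (hB : ∀ χ : MulChar F ℂ, χ ≠ 1 → ‖∑ i ∈ Q, χ (a i)‖ ≤ B) :
    |(#{i ∈ Q | IsPrimitiveRoot (a i) (Fintype.card F - 1)} : ℝ)
        - (Fintype.card F - 1).totient / (Fintype.card F - 1 : ℕ) * #Q|
      ≤ (Fintype.card F - 1).divisors.card * B := by
  set m := Fintype.card F - 1
  have hm : m ≠ 0 := Nat.sub_ne_zero_of_lt Fintype.one_lt_card
  set E : ℕ → ℂ := fun d ↦
    ∑ χ ∈ ({χ : MulChar F ℂ | χ ^ d = 1} : Finset _).erase 1, ∑ i ∈ Q, χ (a i)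
  have hsplit : ∀ d, ∑ χ : MulChar F ℂ with χ ^ d = 1, ∑ i ∈ Q, χ (a i) = #Q + E d := by
    intro d
    rw [← add_sum_erase _ _ (show (1 : MulChar F ℂ) ∈ ({χ | χ ^ d = 1} : Finset _) by simp)]
    congr 1
    simp only [sum_congr rfl fun i hi ↦ MulChar.one_apply (ha i hi).isUnit, sum_const, nsmul_eq_mul,
      mul_one]
  have hE : ∀ d ∈ m.divisors, ‖E d‖ ≤ d * B := by
    intro d hd
    calc ‖E d‖ ≤ ∑ χ ∈ ({χ : MulChar F ℂ | χ ^ d = 1} : Finset _).erase 1, B :=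
          norm_sum_le_of_le _ fun χ hχ ↦ hB χ (ne_of_mem_erase hχ)
      _ ≤ d * B := by
          rw [sum_const, nsmul_eq_mul]
          gcongr
          exact_mod_cast card_erase_le.trans
            (MulChar.card_filter_pow_eq_one (Nat.dvd_of_mem_divisors hd)).le
  have hcount : (#{i ∈ Q | IsPrimitiveRoot (a i) m} : ℂ)
      = m.totient / m * #Q + ∑ d ∈ m.divisors, (μ d : ℂ) / d * E d := by
    rw [MulChar.card_filter_isPrimitiveRoot_eq_sum_divisors Q a ha]
    simp only [hsplit, mul_add, sum_add_distrib, ← sum_mul]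
    rw [sum_divisors_moebius_div_eq_totient_div hm]
  have herror := norm_sum_divisors_moebius_div_mul_le hE
  rw [← Real.norm_eq_abs, ← Complex.norm_real]
  push_cast
  rwa [hcount, add_sub_cancel_left]

/-- If `Q ⊆ {1, …, p-1}` satisfies `|Σ_{n∈Q} χ(n)| ≤ #Q · p^(-δ)` for every
nontrivial multiplicative character `χ` mod `p`, then the number of primitive
roots in `Q` is at least `(φ(p-1)/(p-1))·#Q - c·#Q·p^(-δ)·τ(p-1)` for an
absolute constant `c`; in particular if `c·p^(-δ)·τ(p-1) < φ(p-1)/(p-1)` and `Q`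
is nonempty, then `Q` contains a primitive root modulo `p`. -/
theorem primitive_roots_in_equidistributed_set :
    ∃ c : ℝ, 0 < c ∧
      ∀ (p : ℕ), p.Prime → Odd p → ∀ δ : ℝ, 0 < δ →
      ∀ Q : Finset ℕ, Q ⊆ Finset.Icc 1 (p - 1) →
      (∀ χ : MulChar (ZMod p) ℂ, χ ≠ 1 →
        ‖∑ n ∈ Q, χ (n : ZMod p)‖ ≤ (Q.card : ℝ) * (p : ℝ) ^ (-δ)) →
      ((Nat.totient (p - 1) : ℝ) / ((p : ℝ) - 1)) * Q.card
          - c * Q.card * (p : ℝ) ^ (-δ) * ((p - 1).divisors.card : ℝ)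
        ≤ ((Q.filter fun n => IsPrimitiveRoot ((n : ZMod p)) (p - 1)).card : ℝ) ∧
      (Q.Nonempty →
        c * (p : ℝ) ^ (-δ) * ((p - 1).divisors.card : ℝ)
          < (Nat.totient (p - 1) : ℝ) / ((p : ℝ) - 1) →
        ∃ n ∈ Q, IsPrimitiveRoot ((n : ZMod p)) (p - 1)) := by
  refine ⟨1, one_pos, fun p hp _ δ _ Q hQ hχ ↦ ?_⟩
  have : Fact p.Prime := ⟨hp⟩
  let : Fintype (MulChar (ZMod p) ℂ) := Fintype.ofFinite _
  have hQ_bounds : ∀ n ∈ Q, 0 < n ∧ n < p := fun n hn ↦ by grind [mem_Icc.mp (hQ hn)]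
  have hQ0 : ∀ n ∈ Q, (n : ZMod p) ≠ 0 := fun n hn ↦ by
    rw [Ne, ZMod.natCast_eq_zero_iff]
    exact Nat.not_dvd_of_pos_of_lt (hQ_bounds n hn).1 (hQ_bounds n hn).2
  have hinj : Set.InjOn (Nat.cast : ℕ → ZMod p) Q :=
    (CharP.natCast_injOn_Iio (ZMod p) p).mono fun n hn ↦ (hQ_bounds n hn).2
  -- The coercion in the statement's filter turns `Q` into its image `Q >>= pure ∘ (↑)` in
  -- `Finset (ZMod p)`, built with classical decidable equality.
  have hcount : #{x ∈ (do let n ← Q; pure (n : ZMod p)) | IsPrimitiveRoot x (p - 1)}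
      = #{n ∈ Q | IsPrimitiveRoot ((n : ℕ) : ZMod p) (p - 1)} := by
    simp only [Finset.pure_def, Finset.bind_def, Finset.sup_singleton_apply]
    convert card_image_of_injOn (s := {n ∈ Q | IsPrimitiveRoot ((n : ℕ) : ZMod p) (p - 1)})
      (hinj.mono (filter_subset _ _)) using 2
    convert filter_image
  have hest := abs_card_filter_isPrimitiveRoot_sub_le Q (Nat.cast : ℕ → ZMod p) hQ0
    (by positivity) hχ
  rw [ZMod.card, Nat.cast_sub hp.one_le, Nat.cast_one] at hest
  have hlower := (abs_le.mp hest).1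
  rw [hcount]
  refine ⟨by linarith, fun hne hgap ↦ ?_⟩
  have hQpos : (0 : ℝ) < #Q := by exact_mod_cast hne.card_pos
  have hpos : (0 : ℝ) < #{n ∈ Q | IsPrimitiveRoot ((n : ℕ) : ZMod p) (p - 1)} := by nlinarith
  obtain ⟨n, hn⟩ := card_pos.mp (by exact_mod_cast hpos)
  exact ⟨n, mem_filter.mp hn⟩
end

section
/- For every n ≥ 1, Euler's totient function satisfies φ(n) ≥ c·n/log(log(n+2)) for some absolute constant c > 0. -/
/-!
Euler's product gives `φ n / n = ∏_{p ∣ n} (1 - 1/p) ≥ exp (-∑_{p ∣ n} 1/(p - 1))`. Fix `L ≍ log n`.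
The prime factors `p ≤ L` contribute at most `log log L + O(1)`: this is Mertens' second theorem,
obtained by partial summation over the layers `⌊log p⌋ = k` from Mertens' first theorem
`∑_{p ≤ x} log p / p ≤ log x + log 4`, itself a consequence of Legendre's formula for `N!` and
Chebyshev's bound `θ x ≤ x log 4`. There are at most `log n / log L ≤ L` prime factors above `L`,
each contributing at most `1/L`. Hence `φ n ≫ n / log L ≫ n / log log n`.
-/

open Finset Real

theorem sum_Icc_div_le_harmonic_add (a : ℕ → ℝ) (B : ℝ) {K : ℕ} (hK : 1 ≤ K)
    (h : ∀ k ∈ Icc 1 K, ∑ j ∈ Icc 1 k, a j ≤ k + B) :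
    ∑ k ∈ Icc 1 K, a k / k ≤ harmonic K + B := by
  -- Abel summation: the slack `m + B - ∑_{j ≤ m} a j` is carried along with weight `1 / m`.
  suffices ∀ m ≥ 1, (∀ k ∈ Icc 1 m, ∑ j ∈ Icc 1 k, a j ≤ k + B) →
      ∑ k ∈ Icc 1 m, a k / k + (m + B - ∑ j ∈ Icc 1 m, a j) / m ≤ harmonic m + B by
    have hslack : 0 ≤ (K + B - ∑ j ∈ Icc 1 K, a j) / K :=
      div_nonneg (by linarith [h K (right_mem_Icc.mpr hK)]) (Nat.cast_nonneg K)
    linarith [this K hK h]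
  intro m hm
  induction m, hm using Nat.le_induction with
  | base => simp
  | succ m hm ih =>
    intro hle
    have hslack : 0 ≤ m + B - ∑ j ∈ Icc 1 m, a j := by
      linarith [hle m (mem_Icc.mpr ⟨hm, m.le_succ⟩)]
    have ih := ih fun k hk => hle k (Icc_subset_Icc_right m.le_succ hk)
    have hweight : (m + B - ∑ j ∈ Icc 1 m, a j) / (m + 1) ≤ (m + B - ∑ j ∈ Icc 1 m, a j) / m :=
      div_le_div_of_nonneg_left hslack (by exact_mod_cast hm) (by linarith)
    rw [sum_Icc_succ_top (by omega), sum_Icc_succ_top (by omega), harmonic_succ]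
    push_cast
    have : a (m + 1) / (m + 1) + (m + 1 + B - (∑ j ∈ Icc 1 m, a j + a (m + 1))) / (m + 1)
        = ((m : ℝ) + 1)⁻¹ + (m + B - ∑ j ∈ Icc 1 m, a j) / (m + 1) := by
      field_simp; ring
    linarith

theorem sum_filter_div_le_harmonic_add {ι : Type*} (s : Finset ι) (w : ι → ℝ) (level : ι → ℕ)
    (B : ℝ) {K : ℕ} (hK : 1 ≤ K)
    (h : ∀ k ∈ Icc 1 K, ∑ i ∈ s with level i ∈ Icc 1 k, w i ≤ k + B) :
    ∑ i ∈ s with level i ∈ Icc 1 K, w i / level i ≤ harmonic K + B := by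
  have hfiber : ∀ k, ∑ j ∈ Icc 1 k, ∑ i ∈ s with level i = j, w i
      = ∑ i ∈ s with level i ∈ Icc 1 k, w i := fun k => sum_fiberwise_eq_sum_filter _ _ _ _
  calc ∑ i ∈ s with level i ∈ Icc 1 K, w i / level i
      = ∑ k ∈ Icc 1 K, (∑ i ∈ s with level i = k, w i) / k := by
        rw [← sum_fiberwise_eq_sum_filter]
        refine sum_congr rfl fun k _ => ?_
        rw [sum_div]
        exact sum_congr rfl fun i hi => by rw [(mem_filter.mp hi).2]
    _ ≤ harmonic K + B :=
        sum_Icc_div_le_harmonic_add _ B hK fun k hk => (hfiber k).trans_le (h k hk)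

theorem Nat.div_le_factorization_factorial {p : ℕ} (hp : p.Prime) (N : ℕ) :
    N / p ≤ (N.factorial).factorization p := by
  rw [Nat.factorization_factorial hp (Nat.lt_add_of_pos_right two_pos)]
  simpa using single_le_sum (f := fun i => N / p ^ i) (fun _ _ => Nat.zero_le _)
    (mem_Ico.mpr ⟨le_rfl, by omega⟩ : 1 ∈ Ico 1 (Nat.log p N + 2))

theorem sum_primesLE_div_mul_log_le_log_factorial (N : ℕ) :
    ∑ p ∈ Nat.primesLE N, ((N / p : ℕ) : ℝ) * log p ≤ log (N.factorial) := by
  rw [log_nat_eq_sum_factorization, Finsupp.sum]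
  refine (sum_le_sum fun p hp => ?_).trans (sum_le_sum_of_subset_of_nonneg ?_ fun p _ _ => ?_)
  · exact mul_le_mul_of_nonneg_right
      (mod_cast Nat.div_le_factorization_factorial (Nat.prime_of_mem_primesLE hp) N)
      (log_natCast_nonneg p)
  · intro p hp
    obtain ⟨hpN, hp⟩ := Nat.mem_primesLE.mp hp
    exact Nat.mem_primeFactors.mpr ⟨hp, hp.dvd_factorial.mpr hpN, Nat.factorial_ne_zero N⟩
  · exact mul_nonneg (Nat.cast_nonneg _) (log_natCast_nonneg p)

theorem sum_primesLE_log_div_le (N : ℕ) :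
    ∑ p ∈ Nat.primesLE N, log p / p ≤ log N + log 4 := by
  rcases N.eq_zero_or_pos with rfl | hN
  · simp [log_nonneg]
  have hN0 : (0 : ℝ) < N := by exact_mod_cast hN
  have hterm : ∀ p ∈ Nat.primesLE N,
      N * (log p / p) ≤ ((N / p : ℕ) : ℝ) * log p + log p := by
    intro p hp
    have hpos := (Nat.prime_of_mem_primesLE hp).pos
    have hp0 : (0 : ℝ) < p := by exact_mod_cast hpos
    have hdiv : (N : ℝ) / p ≤ (N / p : ℕ) + 1 := by
      rw [div_le_iff₀ hp0]
      exact_mod_cast ((Nat.div_lt_iff_lt_mul hpos).mp (Nat.lt_succ_self _)).le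
    calc N * (log p / p) = N / p * log p := by ring
      _ ≤ ((N / p : ℕ) + 1) * log p := mul_le_mul_of_nonneg_right hdiv (log_natCast_nonneg p)
      _ = _ := by ring
  have hfact : log (N.factorial) ≤ N * log N := by
    rw [← log_pow]
    exact log_le_log (by positivity) (mod_cast Nat.factorial_le_pow N)
  have htheta := Chebyshev.theta_le_log4_mul_x hN0.le
  rw [Chebyshev.theta_eq_sum_primesLE_log] at htheta
  refine le_of_mul_le_mul_left ?_ hN0
  calc N * ∑ p ∈ Nat.primesLE N, log p / p
      ≤ ∑ p ∈ Nat.primesLE N, ((N / p : ℕ) : ℝ) * log p + ∑ p ∈ Nat.primesLE N, log p := by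
        rw [mul_sum, ← sum_add_distrib]; exact sum_le_sum hterm
    _ ≤ N * log N + log 4 * N :=
        add_le_add ((sum_primesLE_div_mul_log_le_log_factorial N).trans hfact) htheta
    _ = N * (log N + log 4) := by ring

theorem one_lt_log_of_three_le {N : ℕ} (hN : 3 ≤ N) : 1 < log N := by
  rw [lt_log_iff_exp_lt (by positivity)]
  exact exp_one_lt_three.trans_le (mod_cast hN)

theorem Nat.Prime.eq_two_of_log_lt_one {p : ℕ} (hp : p.Prime) (h : Real.log p < 1) :
    p = 2 := by
  by_contra hp2
  exact (one_lt_log_of_three_le (lt_of_le_of_ne hp.two_le (Ne.symm hp2))).not_gt h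

theorem sum_log_div_le_of_floor_log_le {s : Finset ℕ} {k : ℕ}
    (hs : ∀ p ∈ s, p.Prime ∧ ⌊log p⌋₊ ≤ k) : ∑ p ∈ s, log p / p ≤ k + 1 + log 4 := by
  set M := ⌊exp (k + 1)⌋₊
  have hM : (1 : ℝ) ≤ M := by
    exact_mod_cast Nat.le_floor (by simpa using one_le_exp (by positivity : (0 : ℝ) ≤ k + 1))
  have hsub : s ⊆ Nat.primesLE M := by
    intro p hp
    obtain ⟨hp, hpk⟩ := hs p hp
    have hlog : log p < k + 1 := by
      have := Nat.lt_floor_add_one (log (p : ℝ))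
      have : (⌊log (p : ℝ)⌋₊ : ℝ) ≤ k := by exact_mod_cast hpk
      linarith
    refine Nat.mem_primesLE.mpr ⟨Nat.le_floor ?_, hp⟩
    rw [← exp_log (by exact_mod_cast hp.pos : (0 : ℝ) < p)]
    exact (exp_lt_exp.mpr hlog).le
  calc ∑ p ∈ s, log p / p ≤ ∑ p ∈ Nat.primesLE M, log p / p :=
        sum_le_sum_of_subset_of_nonneg hsub fun p _ _ => by positivity
    _ ≤ log M + log 4 := sum_primesLE_log_div_le M
    _ ≤ k + 1 + log 4 := by
        gcongr
        calc log M ≤ log (exp (k + 1)) := log_le_log (by linarith) (Nat.floor_le (exp_pos _).le)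
          _ = k + 1 := log_exp _

theorem inv_le_log_div_div_floor_log {x : ℝ} (hx : 0 < x) (h : 1 ≤ ⌊log x⌋₊) :
    x⁻¹ ≤ log x / x / ⌊log x⌋₊ := by
  have h1 : (1 : ℝ) ≤ ⌊log x⌋₊ := by exact_mod_cast h
  have hlog1 : 1 ≤ log x := (Nat.one_le_floor_iff _).mp h
  have hlog : (⌊log x⌋₊ : ℝ) ≤ log x := Nat.floor_le (by linarith)
  calc x⁻¹ = log x / x / log x := by field_simp [show log x ≠ 0 by linarith]
    _ ≤ log x / x / ⌊log x⌋₊ :=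
        div_le_div_of_nonneg_left (div_nonneg (by linarith) hx.le) (by linarith) hlog

theorem sum_primesLE_inv_le {N : ℕ} (hN : 3 ≤ N) :
    ∑ p ∈ Nat.primesLE N, (p : ℝ)⁻¹ ≤ log (log N) + 5 / 2 + log 4 := by
  have hlogN : 1 ≤ log N := (one_lt_log_of_three_le hN).le
  set K := ⌊log N⌋₊
  have hK : 1 ≤ K := Nat.le_floor (by exact_mod_cast hlogN)
  have hlogK : log K ≤ log (log N) :=
    log_le_log (by exact_mod_cast hK) (Nat.floor_le (by linarith))
  set level : ℕ → ℕ := fun p => ⌊log (p : ℝ)⌋₊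
  have hsmall : ∑ p ∈ Nat.primesLE N with level p ∉ Icc 1 K, (p : ℝ)⁻¹ ≤ 1 / 2 := by
    have hsub : {p ∈ Nat.primesLE N | level p ∉ Icc 1 K} ⊆ {2} := by
      intro p hmem
      obtain ⟨hpN, hp⟩ := Nat.mem_primesLE.mp (mem_filter.mp hmem).1
      have hlevel : level p ≤ K :=
        Nat.floor_le_floor (log_le_log (by exact_mod_cast hp.pos) (mod_cast hpN))
      have hlevel0 : level p = 0 := by
        have := (mem_filter.mp hmem).2
        simp only [mem_Icc, not_and_or, not_le] at this
        omega
      exact mem_singleton.mpr (hp.eq_two_of_log_lt_one (Nat.floor_eq_zero.mp hlevel0))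
    calc _ ≤ ∑ p ∈ ({2} : Finset ℕ), (p : ℝ)⁻¹ :=
          sum_le_sum_of_subset_of_nonneg hsub fun p _ _ => by positivity
      _ = 1 / 2 := by norm_num
  have hlarge : ∑ p ∈ Nat.primesLE N with level p ∈ Icc 1 K, (p : ℝ)⁻¹
      ≤ harmonic K + (1 + log 4) := by
    refine (sum_le_sum fun p hp => ?_).trans
      (sum_filter_div_le_harmonic_add _ (fun p : ℕ => log p / p) _ _ hK fun k _ =>
        (sum_log_div_le_of_floor_log_le fun p hp => ?_).trans_eq (by ring))
    · obtain ⟨hp, hlevel⟩ := mem_filter.mp hp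
      exact inv_le_log_div_div_floor_log (by exact_mod_cast (Nat.prime_of_mem_primesLE hp).pos)
        (mem_Icc.mp hlevel).1
    · obtain ⟨hp, hlevel⟩ := mem_filter.mp hp
      exact ⟨Nat.prime_of_mem_primesLE hp, (mem_Icc.mp hlevel).2⟩
  rw [← sum_filter_add_sum_filter_not _ (fun p => level p ∈ Icc 1 K)]
  linarith [harmonic_le_one_add_log K]

theorem sum_primesLE_inv_sub_one_le {N : ℕ} (hN : 3 ≤ N) :
    ∑ p ∈ Nat.primesLE N, ((p : ℝ) - 1)⁻¹ ≤ log (log N) + 5 / 2 + log 4 + π ^ 2 / 3 := by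
  have hterm : ∀ p ∈ Nat.primesLE N,
      ((p : ℝ) - 1)⁻¹ ≤ (p : ℝ)⁻¹ + 2 * (1 / (p : ℝ) ^ 2) := by
    intro p hp
    have hp : (2 : ℝ) ≤ p := by exact_mod_cast Nat.two_le_of_mem_primesLE hp
    rw [inv_le_iff_one_le_mul₀ (by linarith)]
    field_simp
    nlinarith
  have hzeta : ∑ p ∈ Nat.primesLE N, 1 / (p : ℝ) ^ 2 ≤ π ^ 2 / 6 :=
    sum_le_hasSum _ (fun _ _ => by positivity) hasSum_zeta_two
  calc ∑ p ∈ Nat.primesLE N, ((p : ℝ) - 1)⁻¹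
      ≤ ∑ p ∈ Nat.primesLE N, (p : ℝ)⁻¹ + 2 * ∑ p ∈ Nat.primesLE N, 1 / (p : ℝ) ^ 2 := by
        rw [mul_sum, ← sum_add_distrib]; exact sum_le_sum hterm
    _ ≤ _ := by linarith [sum_primesLE_inv_le hN]

theorem pow_card_filter_lt_primeFactors_le {n : ℕ} (hn : n ≠ 0) (L : ℕ) :
    L ^ #{p ∈ n.primeFactors | L < p} ≤ n :=
  calc L ^ #{p ∈ n.primeFactors | L < p} ≤ ∏ p ∈ n.primeFactors with L < p, p :=
        pow_card_le_prod _ _ _ fun _ hp => (mem_filter.mp hp).2.le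
    _ ≤ ∏ p ∈ n.primeFactors, p := prod_le_prod_of_subset_of_one_le' (filter_subset _ _)
        fun _ hp _ => Nat.pos_of_mem_primeFactors hp
    _ ≤ n := Nat.le_of_dvd (Nat.pos_of_ne_zero hn) (Nat.prod_primeFactors_dvd n)

theorem sum_primeFactors_inv_sub_one_le {n L : ℕ} (hn : n ≠ 0) (hL : 3 ≤ L)
    (hnL : log n ≤ L) :
    ∑ p ∈ n.primeFactors, ((p : ℝ) - 1)⁻¹ ≤ log (log L) + 7 / 2 + log 4 + π ^ 2 / 3 := by
  have hL0 : (0 : ℝ) < L := by positivity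
  have hsmall : ∑ p ∈ n.primeFactors with p ≤ L, ((p : ℝ) - 1)⁻¹
      ≤ ∑ p ∈ Nat.primesLE L, ((p : ℝ) - 1)⁻¹ := by
    refine sum_le_sum_of_subset_of_nonneg (fun p hp => ?_) fun p hp _ => ?_
    · obtain ⟨hp, hpL⟩ := mem_filter.mp hp
      exact Nat.mem_primesLE.mpr ⟨hpL, Nat.prime_of_mem_primeFactors hp⟩
    · have : (1 : ℝ) < p := by exact_mod_cast Nat.one_lt_of_mem_primesLE hp
      exact inv_nonneg.mpr (by linarith)
  have hlarge : ∑ p ∈ n.primeFactors with L < p, ((p : ℝ) - 1)⁻¹ ≤ 1 := by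
    set S := {p ∈ n.primeFactors | L < p}
    have hcard : (#S : ℝ) ≤ L := by
      have h := log_le_log (by positivity)
        (mod_cast pow_card_filter_lt_primeFactors_le hn L : ((L ^ #S : ℕ) : ℝ) ≤ n)
      push_cast at h
      rw [log_pow] at h
      nlinarith [one_lt_log_of_three_le hL]
    calc ∑ p ∈ S, ((p : ℝ) - 1)⁻¹ ≤ ∑ p ∈ S, (L : ℝ)⁻¹ := by
          refine sum_le_sum fun p hp => inv_anti₀ hL0 ?_
          have : L + 1 ≤ p := (mem_filter.mp hp).2
          have : (L : ℝ) + 1 ≤ p := by exact_mod_cast this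
          linarith
      _ = #S / L := by rw [sum_const, nsmul_eq_mul, div_eq_mul_inv]
      _ ≤ 1 := div_le_one_of_le₀ hcard hL0.le
  rw [← sum_filter_add_sum_filter_not _ (· ≤ L)]
  simp only [not_le]
  linarith [sum_primesLE_inv_sub_one_le hL]

theorem exp_neg_inv_sub_one_le_one_sub_inv {x : ℝ} (hx : 1 < x) :
    exp (-(x - 1)⁻¹) ≤ 1 - x⁻¹ := by
  have hx1 : 0 < x - 1 := by linarith
  have : 1 - x⁻¹ = (1 + (x - 1)⁻¹)⁻¹ := by field_simp; ring
  rw [this, exp_neg]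
  exact inv_anti₀ (by positivity) (by linarith [add_one_le_exp (x - 1)⁻¹])

theorem mul_exp_neg_sum_le_totient (n : ℕ) :
    n * exp (-∑ p ∈ n.primeFactors, ((p : ℝ) - 1)⁻¹) ≤ n.totient := by
  have h := congrArg (fun q : ℚ => (q : ℝ)) (Nat.totient_eq_mul_prod_factors n)
  push_cast at h
  rw [h, ← sum_neg_distrib, exp_sum]
  refine mul_le_mul_of_nonneg_left (prod_le_prod (fun _ _ => (exp_pos _).le) fun p hp => ?_)
    (Nat.cast_nonneg n)
  exact exp_neg_inv_sub_one_le_one_sub_inv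
    (by exact_mod_cast (Nat.prime_of_mem_primeFactors hp).one_lt)

theorem mul_exp_neg_le_totient_mul_log {n L : ℕ} (hn : n ≠ 0) (hL : 3 ≤ L)
    (hnL : log n ≤ L) :
    n * exp (-(7 / 2 + log 4 + π ^ 2 / 3)) ≤ n.totient * log L := by
  have hlogL : 0 < log L := one_pos.trans (one_lt_log_of_three_le hL)
  have hexp : exp (-(log (log L) + (7 / 2 + log 4 + π ^ 2 / 3)))
      = exp (-(7 / 2 + log 4 + π ^ 2 / 3)) / log L := by
    rw [neg_add, exp_add, exp_neg (log _), exp_log hlogL, inv_mul_eq_div]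
  calc n * exp (-(7 / 2 + log 4 + π ^ 2 / 3))
      = n * exp (-(log (log L) + (7 / 2 + log 4 + π ^ 2 / 3))) * log L := by
        rw [hexp]; field_simp
    _ ≤ n.totient * log L := by
        refine mul_le_mul_of_nonneg_right ((mul_exp_neg_sum_le_totient n).trans' ?_) hlogL.le
        gcongr
        exact (sum_primeFactors_inv_sub_one_le hn hL hnL).trans_eq (by ring)

theorem log_ceil_three_mul_le {x : ℝ} (hx : 1 ≤ x) : log ⌈3 * x⌉₊ ≤ log 4 + log x := by
  have hceil : (⌈3 * x⌉₊ : ℝ) ≤ 4 * x := by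
    linarith [Nat.ceil_lt_add_one (by positivity : 0 ≤ 3 * x)]
  rw [← log_mul (by norm_num) (by positivity)]
  exact log_le_log (Nat.cast_pos.mpr (Nat.ceil_pos.mpr (by positivity))) hceil

theorem log_log_three_pos : 0 < log (log 3) :=
  log_pos (by exact_mod_cast one_lt_log_of_three_le le_rfl)

theorem log_log_three_le {x : ℝ} (hx : 3 ≤ x) : log (log 3) ≤ log (log x) :=
  log_le_log (log_pos (by norm_num)) (log_le_log (by norm_num) hx)

theorem mul_exp_neg_le_totient_mul_log_log {n : ℕ} (hn : 1 ≤ n) :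
    n * exp (-(7 / 2 + log 4 + π ^ 2 / 3))
      ≤ n.totient * ((log 4 / log (log 3) + 1) * log (log (n + 2))) := by
  have h3 : (3 : ℝ) ≤ n + 2 := by exact_mod_cast (show 3 ≤ n + 2 by omega)
  have hlog : 1 < log (n + 2 : ℝ) := by
    exact_mod_cast one_lt_log_of_three_le (show 3 ≤ n + 2 by omega)
  have hD := log_log_three_le h3
  set L := ⌈3 * log (n + 2 : ℝ)⌉₊
  have hL3 : 3 ≤ L := Nat.lt_ceil.mpr (by push_cast; linarith)
  have hnL : log n ≤ L := calc
    log n ≤ 3 * log (n + 2 : ℝ) := by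
      linarith [log_le_log (by exact_mod_cast hn) (by linarith : (n : ℝ) ≤ n + 2)]
    _ ≤ L := Nat.le_ceil _
  have hlogL : log L ≤ (log 4 / log (log 3) + 1) * log (log (n + 2)) := by
    have : log 4 ≤ log 4 / log (log 3) * log (log (n + 2)) := by
      rw [div_mul_eq_mul_div, le_div_iff₀ log_log_three_pos]; gcongr
    linarith [log_ceil_three_mul_le hlog.le]
  calc n * exp (-(7 / 2 + log 4 + π ^ 2 / 3)) ≤ n.totient * log L :=
        mul_exp_neg_le_totient_mul_log (by omega) hL3 hnL
    _ ≤ _ := by gcongr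

/-- Euler's totient function satisfies `φ(n) ≥ c·n / log log (n+2)` for some
absolute constant `c > 0` and all `n ≥ 1`. -/
theorem totient_lower_bound :
    ∃ c : ℝ, 0 < c ∧ ∀ n : ℕ, 1 ≤ n →
      c * n / Real.log (Real.log (n + 2)) ≤ (Nat.totient n : ℝ) := by
  set A := log 4 / log (log 3) + 1
  have hA : 0 < A := by have := log_log_three_pos; positivity
  refine ⟨exp (-(7 / 2 + log 4 + π ^ 2 / 3)) / A, by positivity, fun n hn => ?_⟩
  have hD : 0 < log (log (n + 2 : ℝ)) :=
    log_log_three_pos.trans_le (log_log_three_le (by exact_mod_cast (show 3 ≤ n + 2 by omega)))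
  rw [div_le_iff₀ hD, div_mul_eq_mul_div, div_le_iff₀ hA, mul_comm _ (n : ℝ)]
  exact (mul_exp_neg_le_totient_mul_log_log hn).trans_eq (by ring)
end
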